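/- The graph K'_{2,4}, obtained from the complete bipartite graph K_{2,4} by doubling the four edges incident with one of the two vertices of degree four, contains no immersion of K_{3,3} and is weakly 5-edge-connected. -/

import Mathlib

/-- A finite multigraph without loops: vertices `V`, edges `E`,
each edge has an unordered pair of distinct endpoints. -/
structure Multigraph where
  V : Type
  E : Type
  [fV : Fintype V]
  [fE : Fintype E]
  [dV : DecidableEq V]
  [dE : DecidableEq E]
  ends : E → Sym2 V
  noLoop : ∀ e, ¬ (ends e).IsDiag

attribute [instance] Multigraph.fV Multigraph.fE Multigraph.dV Multigraph.dE

namespace Multigraph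

/-- Walks in a multigraph. -/
inductive Walk (G : Multigraph) : G.V → G.V → Type
  | nil (v : G.V) : Walk G v v
  | cons {u v w : G.V} (e : G.E) (h : G.ends e = s(u, v)) (p : Walk G v w) : Walk G u w

/-- The list of edges traversed by a walk. -/
def Walk.edges {G : Multigraph} : {u v : G.V} → G.Walk u v → List G.E
  | _, _, .nil _ => []
  | _, _, .cons e _ p => e :: p.edges

/-- The list of vertices visited by a walk. -/
def Walk.support {G : Multigraph} : {u v : G.V} → G.Walk u v → List G.V
  | u, _, .nil _ => [u]
  | u, _, .cons _ _ p => u :: p.support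

/-- A walk is a path if it visits no vertex twice. -/
def Walk.IsPath {G : Multigraph} {u v : G.V} (p : G.Walk u v) : Prop := p.support.Nodup

/-- Data of an immersion of `H` into `G`: an injective map on vertices and,
for each edge of `H`, a path in `G` joining the images of its endpoints,
the paths being pairwise edge-disjoint. -/
structure ImmersionData (H G : Multigraph) where
  vmap : H.V → G.V
  inj : Function.Injective vmap
  pstart : H.E → G.V
  pend : H.E → G.V
  walk : ∀ e, G.Walk (pstart e) (pend e)
  ends_eq : ∀ e, s(pstart e, pend e) = (H.ends e).map vmap
  isPath : ∀ e, (walk e).IsPath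
  edgeDisj : ∀ e e', e ≠ e' → List.Disjoint (walk e).edges (walk e').edges

/-- `H` immerses in `G`. -/
def Immerses (H G : Multigraph) : Prop := Nonempty (ImmersionData H G)

/-- Data witnessing that `G` contains a subdivision of `H` as a subgraph
(i.e. `H` is a topological minor of `G`): as an immersion, but moreover the
paths may only meet at images of common endpoints. -/
structure SubdivisionData (H G : Multigraph) extends ImmersionData H G where
  vtxDisj : ∀ e e', e ≠ e' → ∀ x, x ∈ (walk e).support → x ∈ (walk e').support →
    ∃ w, x = vmap w ∧ w ∈ H.ends e ∧ w ∈ H.ends e'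

/-- `G` contains a subdivision of `H` as a subgraph. -/
def ContainsSubdivision (H G : Multigraph) : Prop := Nonempty (SubdivisionData H G)

/-- The complete bipartite graph `K_{3,3}`. -/
def K33 : Multigraph where
  V := Fin 3 ⊕ Fin 3
  E := Fin 3 × Fin 3
  ends e := s(Sum.inl e.1, Sum.inr e.2)
  noLoop e := by simp [Sym2.mk_isDiag_iff]

/-- The complete graph `K_5`. -/
def K5 : Multigraph where
  V := Fin 5
  E := {p : Fin 5 × Fin 5 // p.1 < p.2}
  ends e := s(e.1.1, e.1.2)
  noLoop e := by simpa [Sym2.mk_isDiag_iff] using e.2.ne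

variable (G : Multigraph)

/-- The degree of a vertex: the number of incident edges. -/
def deg (v : G.V) : ℕ := (Finset.univ.filter fun e => v ∈ G.ends e).card

/-- The multiplicity of the (possible) edge between `u` and `v`. -/
def mult (u v : G.V) : ℕ := (Finset.univ.filter fun e => G.ends e = s(u, v)).card

/-- The edge cut determined by a set `A` of vertices. -/
def cut (A : Finset G.V) : Finset G.E :=
  Finset.univ.filter fun e => ∃ u ∈ A, ∃ v ∈ Aᶜ, G.ends e = s(u, v)

/-- Every edge cut of `G` has at least `k` edges. -/
def EdgeConnGe (k : ℕ) : Prop :=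
  ∀ A : Finset G.V, A.Nonempty → A ≠ Finset.univ → k ≤ (G.cut A).card

/-- Internally 4-edge-connected: 3-edge-connected and every 3-edge cut has a
side consisting of a single vertex. -/
def Internally4EC : Prop :=
  G.EdgeConnGe 3 ∧ ∀ A : Finset G.V, A.Nonempty → A ≠ Finset.univ →
    (G.cut A).card = 3 → A.card = 1 ∨ Aᶜ.card = 1

/-- Weakly 5-edge-connected: internally 4-edge-connected and every 4-edge cut
has a side with at most two vertices. -/
def Weakly5EC : Prop :=
  G.Internally4EC ∧ ∀ A : Finset G.V, A.Nonempty → A ≠ Finset.univ →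
    (G.cut A).card = 4 → A.card ≤ 2 ∨ Aᶜ.card ≤ 2

/-- `G` is `d`-regular. -/
def IsRegular (d : ℕ) : Prop := ∀ v, G.deg v = d

/-- `G` is connected. -/
def Connected : Prop := ∀ u v : G.V, Nonempty (G.Walk u v)

/-- `v` is a cut-vertex: the remaining vertices split into two nonempty parts
with no edge between them. -/
def IsCutVertex (v : G.V) : Prop :=
  ∃ C D : Finset G.V, C.Nonempty ∧ D.Nonempty ∧ Disjoint C D ∧ v ∉ C ∧ v ∉ D ∧
    (∀ x : G.V, x ∈ C ∪ D ∨ x = v) ∧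
    ∀ e : G.E, ¬ ∃ u ∈ C, ∃ w ∈ D, G.ends e = s(u, w)

/-- `G` is 2-connected. -/
def TwoConnected : Prop :=
  G.Connected ∧ 3 ≤ Fintype.card G.V ∧ ∀ v, ¬ G.IsCutVertex v

/-- Planarity, via Kuratowski's characterization: no subdivision of `K_5`
nor of `K_{3,3}` as a subgraph. -/
def Planar : Prop := ¬ ContainsSubdivision K5 G ∧ ¬ ContainsSubdivision K33 G

end Multigraph

namespace Multigraph

/-- The graph `K'_{2,4}` obtained from `K_{2,4}` (parts `{a, b}` and
`{c_1, …, c_4}`) by doubling the four edges incident with `a`.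
Vertices: `Sum.inl 0 = a`, `Sum.inl 1 = b`, `Sum.inr i = c_i`. -/
def K24' : Multigraph where
  V := Fin 2 ⊕ Fin 4
  E := (Fin 4 × Fin 2) ⊕ Fin 4
  ends e := match e with
    | .inl p => s(Sum.inl 0, Sum.inr p.1)
    | .inr i => s(Sum.inl 1, Sum.inr i)
  noLoop e := match e with
    | .inl _ => by simp [Sym2.mk_isDiag_iff]
    | .inr _ => by simp [Sym2.mk_isDiag_iff]

end Multigraph

/-!
An immersion of `K_{3,3}` in `K'_{2,4}` is a bijection on vertices, since both graphs have six.
A path of the immersion uses one edge at each of its ends and two at each internal vertex, and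
the paths are edge-disjoint. The vertex `b` has degree 4 and ends three paths, so it is internal
to none; the vertex `a` has degree 8 and ends three paths, so it is internal to at most two. But
the `c_i` are pairwise non-adjacent with all neighbours in `{a, b}`, so each of the (at least
three) edges of `K_{3,3}` avoiding the preimages of `a` and `b` is realised by a path through `a`.
Weak 5-edge-connectivity is a finite check.
-/

namespace Multigraph

variable {G H : Multigraph}

def Walk.degree {u w : G.V} (p : G.Walk u w) (v : G.V) : ℕ :=
  p.edges.countP fun e => v ∈ G.ends e

namespace Walk

theorem start_mem_support {u w : G.V} (p : G.Walk u w) : u ∈ p.support := by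
  cases p <;> simp [support]

theorem end_mem_support {u w : G.V} (p : G.Walk u w) : w ∈ p.support := by
  induction p with
  | nil => simp [support]
  | cons e h p ih => simp [support, ih]

theorem mem_support_of_mem_edges {u w x : G.V} (p : G.Walk u w) {e : G.E}
    (he : e ∈ p.edges) (hx : x ∈ G.ends e) : x ∈ p.support := by
  induction p with
  | nil => simp [edges] at he
  | cons e' h' p ih =>
    simp only [edges, List.mem_cons] at he
    simp only [support, List.mem_cons]
    rcases he with rfl | he
    · rw [h', Sym2.mem_iff] at hx
      rcases hx with rfl | rfl
      · exact .inl rfl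
      · exact .inr p.start_mem_support
    · exact .inr (ih he)

theorem IsPath.edges_nodup {u w : G.V} {p : G.Walk u w} (hp : p.IsPath) : p.edges.Nodup := by
  induction p with
  | nil => simp [edges]
  | cons e h p ih =>
    simp only [IsPath, support, List.nodup_cons] at hp
    refine List.nodup_cons.mpr ⟨fun he => hp.1 ?_, ih hp.2⟩
    exact p.mem_support_of_mem_edges he (by simp [h])

theorem mem_support_iff {u w x : G.V} (p : G.Walk u w) :
    x ∈ p.support ↔ x = u ∨ ∃ e ∈ p.edges, x ∈ G.ends e := by
  refine ⟨fun hx => ?_, ?_⟩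
  · induction p with
    | nil => simpa [support, edges] using hx
    | cons e h q ih =>
      simp only [support, List.mem_cons] at hx
      rcases hx with rfl | hx
      · exact .inl rfl
      · rcases ih hx with rfl | ⟨e', he', hxe'⟩
        · exact .inr ⟨e, by simp [edges], by simp [h]⟩
        · exact .inr ⟨e', by simp [edges, he'], hxe'⟩
  · rintro (rfl | ⟨e, he, hx⟩)
    · exact p.start_mem_support
    · exact p.mem_support_of_mem_edges he hx

theorem one_le_degree {u w x : G.V} (p : G.Walk u w) (hx : x ∈ p.support) (huw : u ≠ w) :
    1 ≤ p.degree x := by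
  obtain ⟨e, he, hxe⟩ : ∃ e ∈ p.edges, x ∈ G.ends e := by
    rcases p.mem_support_iff.mp hx with rfl | h
    · cases p with
      | nil => exact absurd rfl huw
      | cons e h q => exact ⟨e, by simp [edges], by simp [h]⟩
    · exact h
  exact List.countP_pos_iff.mpr ⟨e, he, by simpa using hxe⟩

theorem IsPath.two_le_degree {u w x : G.V} {p : G.Walk u w} (hp : p.IsPath)
    (hx : x ∈ p.support) (hxu : x ≠ u) (hxw : x ≠ w) : 2 ≤ p.degree x := by
  induction p with
  | nil => exact absurd (List.mem_singleton.mp hx) hxu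
  | @cons u v w e h q ih =>
    simp only [IsPath, support, List.nodup_cons] at hp
    simp only [support, List.mem_cons] at hx
    rcases hx with rfl | hx
    · exact absurd rfl hxu
    simp only [degree, edges, List.countP_cons] at ih ⊢
    by_cases hxv : x = v
    · subst hxv
      have := q.one_le_degree q.start_mem_support hxw
      simp only [degree] at this
      simp only [h, Sym2.mem_mk_right, decide_true, if_true]
      omega
    · have := ih hp.2 hx hxv hxw
      omega

end Walk

namespace ImmersionData

variable (D : ImmersionData H G)

theorem exists_mem_ends_vmap_eq_pstart (f : H.E) : ∃ z ∈ H.ends f, D.vmap z = D.pstart f :=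
  Sym2.mem_map.mp (D.ends_eq f ▸ Sym2.mem_mk_left _ _)

theorem vmap_mem_iff (f : H.E) (x : H.V) :
    D.vmap x ∈ s(D.pstart f, D.pend f) ↔ x ∈ H.ends f := by
  rw [D.ends_eq, Sym2.mem_map]
  exact ⟨fun ⟨z, hz, hzx⟩ => D.inj hzx ▸ hz, fun hx => ⟨x, hx, rfl⟩⟩

theorem pstart_ne_pend (f : H.E) : D.pstart f ≠ D.pend f := fun h =>
  H.noLoop f <| (Sym2.isDiag_map D.inj).mp <| D.ends_eq f ▸ Sym2.mk_isDiag_iff.mpr h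

theorem sum_degree_le (v : G.V) : ∑ f, (D.walk f).degree v ≤ G.deg v := by
  set T : H.E → Finset G.E := fun f => ((D.walk f).edges.filter fun e => v ∈ G.ends e).toFinset
  have hT : ∀ f, (D.walk f).degree v = (T f).card := fun f => by
    rw [List.toFinset_card_of_nodup (((D.isPath f).edges_nodup).filter _), Walk.degree,
      List.countP_eq_length_filter]
  have hdisj : ((Finset.univ : Finset H.E) : Set H.E).PairwiseDisjoint T := by
    intro f _ f' _ hff'
    simp only [Function.onFun, T, List.disjoint_toFinset_iff_disjoint]
    exact fun e he he' => D.edgeDisj f f' hff' (List.mem_of_mem_filter he) (List.mem_of_mem_filter he')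
  calc ∑ f, (D.walk f).degree v = (Finset.univ.biUnion T).card := by
        rw [Finset.card_biUnion hdisj]; exact Finset.sum_congr rfl fun f _ => hT f
    _ ≤ G.deg v := Finset.card_le_card fun e he => by
        simp only [T, Finset.mem_biUnion, List.mem_toFinset, List.mem_filter] at he
        obtain ⟨-, -, -, hve⟩ := he
        exact Finset.mem_filter.mpr ⟨Finset.mem_univ _, of_decide_eq_true hve⟩

theorem deg_add_two_mul_card_internal_le (x : H.V) :
    H.deg x + 2 * (Finset.univ.filter fun f => D.vmap x ∈ (D.walk f).support ∧ x ∉ H.ends f).card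
      ≤ G.deg (D.vmap x) := by
  rw [deg, Finset.card_filter, Finset.card_filter, Finset.mul_sum, ← Finset.sum_add_distrib]
  refine (Finset.sum_le_sum fun f _ => ?_).trans (D.sum_degree_le _)
  by_cases hx : x ∈ H.ends f
  · have hend : D.vmap x = D.pstart f ∨ D.vmap x = D.pend f :=
      Sym2.mem_iff.mp ((D.vmap_mem_iff f x).mpr hx)
    have hsupp : D.vmap x ∈ (D.walk f).support := by
      rcases hend with h | h <;> rw [h]
      exacts [(D.walk f).start_mem_support, (D.walk f).end_mem_support]
    simpa [hx] using (D.walk f).one_le_degree hsupp (D.pstart_ne_pend f)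
  · by_cases hs : D.vmap x ∈ (D.walk f).support
    · have hend := mt (D.vmap_mem_iff f x).mp hx
      rw [Sym2.mem_iff, not_or] at hend
      simpa [hx, hs] using (D.isPath f).two_le_degree hs hend.1 hend.2
    · simp [hx, hs]

end ImmersionData

theorem K33_deg (x : K33.V) : K33.deg x = 3 := by
  revert x; decide

theorem K33_three_le_card_edges_avoiding (x y : K33.V) (hxy : x ≠ y) :
    3 ≤ (Finset.univ.filter fun f => x ∉ K33.ends f ∧ y ∉ K33.ends f).card := by
  revert x y; decide

theorem K24'_deg_inl_zero : K24'.deg (Sum.inl 0) = 8 := by decide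

theorem K24'_deg_inl_one : K24'.deg (Sum.inl 1) = 4 := by decide

theorem K24'_eq_inl_of_ends_eq (e : K24'.E) (u v : K24'.V) (h : K24'.ends e = s(u, v))
    (hu₀ : u ≠ Sum.inl 0) (hu₁ : u ≠ Sum.inl 1) : v = Sum.inl 0 ∨ v = Sum.inl 1 := by
  rcases e with ⟨k, i⟩ | k <;> rcases Sym2.eq_iff.mp h with ⟨rfl, -⟩ | ⟨rfl, -⟩
  all_goals first | exact absurd rfl ‹_› | exact .inl rfl | exact .inr rfl

theorem K24'_inl_mem_support {u w : K24'.V} (p : K24'.Walk u w) (huw : u ≠ w)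
    (hu₀ : u ≠ Sum.inl 0) (hu₁ : u ≠ Sum.inl 1) :
    Sum.inl 0 ∈ p.support ∨ Sum.inl 1 ∈ p.support := by
  cases p with
  | nil => exact absurd rfl huw
  | cons e h q =>
    rcases K24'_eq_inl_of_ends_eq e _ _ h hu₀ hu₁ with rfl | rfl
    exacts [.inl (List.mem_cons_of_mem _ q.start_mem_support),
      .inr (List.mem_cons_of_mem _ q.start_mem_support)]

theorem ImmersionData.K24'_mem_support_of_notMem_ends (D : ImmersionData H K24') {x y : H.V}
    (hx : D.vmap x = Sum.inl 0) (hy : D.vmap y = Sum.inl 1) {f : H.E} (hxf : x ∉ H.ends f)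
    (hyf : y ∉ H.ends f) : D.vmap x ∈ (D.walk f).support ∨ D.vmap y ∈ (D.walk f).support := by
  obtain ⟨z, hz, hzs⟩ := D.exists_mem_ends_vmap_eq_pstart f
  have hs₀ : D.pstart f ≠ Sum.inl 0 := by
    rw [← hx, ← hzs]; exact D.inj.ne fun h => hxf (h ▸ hz)
  have hs₁ : D.pstart f ≠ Sum.inl 1 := by
    rw [← hy, ← hzs]; exact D.inj.ne fun h => hyf (h ▸ hz)
  rw [hx, hy]
  exact K24'_inl_mem_support (D.walk f) (D.pstart_ne_pend f) hs₀ hs₁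

theorem not_immerses_K33_K24' : ¬ Immerses K33 K24' := by
  rintro ⟨D⟩
  have hsurj : Function.Surjective D.vmap :=
    ((Fintype.bijective_iff_injective_and_card _).mpr ⟨D.inj, rfl⟩).2
  obtain ⟨x, hx⟩ := hsurj (Sum.inl 0)
  obtain ⟨y, hy⟩ := hsurj (Sum.inl 1)
  have hxy : x ≠ y := by
    rintro rfl
    exact zero_ne_one (Sum.inl.inj (hx.symm.trans hy))
  have hb := (D.deg_add_two_mul_card_internal_le y).trans_eq (by rw [hy, K24'_deg_inl_one])
  rw [K33_deg] at hb
  have hb_empty : (Finset.univ.filter fun f =>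
      D.vmap y ∈ (D.walk f).support ∧ y ∉ K33.ends f) = ∅ := Finset.card_eq_zero.mp (by omega)
  have ha := (D.deg_add_two_mul_card_internal_le x).trans_eq (by rw [hx, K24'_deg_inl_zero])
  rw [K33_deg] at ha
  have hsub : (Finset.univ.filter fun f => x ∉ K33.ends f ∧ y ∉ K33.ends f) ⊆
      Finset.univ.filter fun f => D.vmap x ∈ (D.walk f).support ∧ x ∉ K33.ends f := by
    intro f hf
    obtain ⟨-, hxf, hyf⟩ := Finset.mem_filter.mp hf
    refine Finset.mem_filter.mpr ⟨Finset.mem_univ f, ?_, hxf⟩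
    refine (D.K24'_mem_support_of_notMem_ends hx hy hxf hyf).resolve_right fun hyp => ?_
    exact Finset.filter_eq_empty_iff.mp hb_empty (Finset.mem_univ f) ⟨hyp, hyf⟩
  have := Finset.card_le_card hsub
  have := K33_three_le_card_edges_avoiding x y hxy
  omega

theorem K24'_weakly5EC : K24'.Weakly5EC := by
  unfold Weakly5EC Internally4EC EdgeConnGe
  decide

end Multigraph

open Multigraph in
/-- `K'_{2,4}` contains no immersion of `K_{3,3}` and is weakly
5-edge-connected. -/
theorem K24'_properties : ¬ Immerses K33 K24' ∧ K24'.Weakly5EC :=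
  ⟨not_immerses_K33_K24', K24'_weakly5EC⟩
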